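/- arXiv:2510.11371 — 3 statements merged into one kernel-verified Lean document; each statement's English description precedes it below -/
import Mathlib

section
/- Fix a norm |·| on ℝ^k and constants 0 < c₁ ≤ c₂ with B^{ℓ²}_{c₁} ⊆ B₁^{|·|} ⊆ B^{ℓ²}_{c₂} (comparing the |·|-unit ball with Euclidean balls), and suppose W ⊂ ℝ^m × ℝ_{>0} satisfies B^{ℓ²,m}_{c₃} × (0,c₃] ⊆ W ⊆ B^{ℓ²,m+1}_{c₄}. Define C_{k,m}(R) = { y ∈ ℝⁿ : ‖(y₁,…,y_k)‖₂ ≤ y_n ≤ R, ‖(y_{k+1},…,y_{n−1})‖₂ ≤ R }. Then for every X > 0: (a) C(B_X^k, W) · Φ(−n^{−1} log(c₂X)) ⊆ C_{k,m}(c₄ c₂^{k/n} X^{k/n}); and (b) C_{k,m}(c₃ c₁^{k/n} X^{k/n}) ∖ {y_n = 0} ⊆ C(B_X^k, W) · Φ(−n^{−1} log(c₁X)). -/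
open MeasureTheory Pointwise

/-- Euclidean norm on `ℝ^d`. -/
noncomputable def e2 {d : ℕ} (v : Fin d → ℝ) : ℝ := Real.sqrt (∑ i, v i ^ 2)


lemma e2_nonneg {d : ℕ} (v : Fin d → ℝ) : 0 ≤ e2 v := Real.sqrt_nonneg _

lemma e2_smul {d : ℕ} (a : ℝ) (v : Fin d → ℝ) : e2 (a • v) = |a| * e2 v := by
  unfold e2
  rw [← Real.sqrt_sq_eq_abs, ← Real.sqrt_mul (sq_nonneg a), Finset.mul_sum]
  congr 1
  exact Finset.sum_congr rfl fun i _ => by simp [mul_pow]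

lemma e2_zero {d : ℕ} : e2 (0 : Fin d → ℝ) = 0 := by
  unfold e2; simp

/-- Comparison of `C(B_X^k, W)·Φ(-n⁻¹ log(cX))` (given in its explicit form
`{y : ν(y₁) ≤ c⁻¹ y_n, (y_{k+1},…,y_n) ∈ (cX)^{k/n} W}`) with the standard cones
`C_{k,m}(R) = {y : ‖(y₁,…,y_k)‖₂ ≤ y_n ≤ R, ‖(y_{k+1},…,y_{n-1})‖₂ ≤ R}`. -/
theorem cone_sandwich (k m : ℕ) (hk : 1 ≤ k)
    (ν : (Fin k → ℝ) → ℝ)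
    (hν₁ : ∀ (a : ℝ) (v : Fin k → ℝ), ν (a • v) = |a| * ν v)
    (hν₂ : ∀ v u : Fin k → ℝ, ν (v + u) ≤ ν v + ν u)
    (hν₃ : ∀ v : Fin k → ℝ, ν v = 0 → v = 0)
    (c₁ c₂ c₃ c₄ : ℝ) (hc₁ : 0 < c₁) (hc₁₂ : c₁ ≤ c₂) (hc₃ : 0 < c₃) (hc₄ : 0 < c₄)
    (hball₁ : ∀ v : Fin k → ℝ, e2 v ≤ c₁ → ν v ≤ 1)
    (hball₂ : ∀ v : Fin k → ℝ, ν v ≤ 1 → e2 v ≤ c₂)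
    (W : Set ((Fin m → ℝ) × ℝ))
    (hW₁ : ∀ (u : Fin m → ℝ) (r : ℝ), e2 u ≤ c₃ → 0 < r → r ≤ c₃ → (u, r) ∈ W)
    (hW₂ : ∀ w ∈ W, Real.sqrt (e2 w.1 ^ 2 + w.2 ^ 2) ≤ c₄)
    (X : ℝ) (hX : 0 < X) :
    ({y : (Fin k → ℝ) × (Fin m → ℝ) × ℝ |
        ν y.1 ≤ c₂⁻¹ * y.2.2 ∧ y.2 ∈ ((c₂ * X) ^ ((k : ℝ) / ((k : ℝ) + m + 1))) • W}
      ⊆ {y : (Fin k → ℝ) × (Fin m → ℝ) × ℝ |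
          e2 y.1 ≤ y.2.2 ∧ y.2.2 ≤ c₄ * c₂ ^ ((k : ℝ) / ((k : ℝ) + m + 1))
              * X ^ ((k : ℝ) / ((k : ℝ) + m + 1))
            ∧ e2 y.2.1 ≤ c₄ * c₂ ^ ((k : ℝ) / ((k : ℝ) + m + 1))
              * X ^ ((k : ℝ) / ((k : ℝ) + m + 1))})
    ∧
    ({y : (Fin k → ℝ) × (Fin m → ℝ) × ℝ |
          e2 y.1 ≤ y.2.2 ∧ y.2.2 ≤ c₃ * c₁ ^ ((k : ℝ) / ((k : ℝ) + m + 1))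
              * X ^ ((k : ℝ) / ((k : ℝ) + m + 1))
            ∧ e2 y.2.1 ≤ c₃ * c₁ ^ ((k : ℝ) / ((k : ℝ) + m + 1))
              * X ^ ((k : ℝ) / ((k : ℝ) + m + 1))}
        \ {y : (Fin k → ℝ) × (Fin m → ℝ) × ℝ | y.2.2 = 0}
      ⊆ {y : (Fin k → ℝ) × (Fin m → ℝ) × ℝ |
          ν y.1 ≤ c₁⁻¹ * y.2.2 ∧ y.2 ∈ ((c₁ * X) ^ ((k : ℝ) / ((k : ℝ) + m + 1))) • W}) := by
  have hn : (0:ℝ) < (k : ℝ) + m + 1 := by positivity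
  set s : ℝ := (k : ℝ) / ((k : ℝ) + m + 1) with hs
  have hc₂ : 0 < c₂ := lt_of_lt_of_le hc₁ hc₁₂
  -- ν is nonneg, ν 0 = 0
  have hν0 : ν 0 = 0 := by
    have := hν₁ 0 0; simpa using this
  have hνnn : ∀ v, 0 ≤ ν v := by
    intro v
    have h1 : ν (v + (-1 : ℝ) • v) ≤ ν v + ν ((-1 : ℝ) • v) := hν₂ _ _
    have h2 : ν ((-1 : ℝ) • v) = ν v := by rw [hν₁]; simp
    have h3 : v + (-1 : ℝ) • v = 0 := by simp
    rw [h3, hν0, h2] at h1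
    linarith
  have hpow : ∀ c : ℝ, 0 < c → (c * X) ^ s = c ^ s * X ^ s := fun c hc =>
    Real.mul_rpow hc.le hX.le
  have hpowpos : ∀ c : ℝ, 0 < c → 0 < (c * X) ^ s := fun c hc =>
    Real.rpow_pos_of_pos (mul_pos hc hX) s
  constructor
  · rintro ⟨y₁, y₂, yn⟩ ⟨h1, h2⟩
    dsimp only at h1 h2
    rw [Set.mem_smul_set] at h2
    obtain ⟨w, hwW, hw⟩ := h2
    set t := (c₂ * X) ^ s with ht
    have htpos : 0 < t := hpowpos c₂ hc₂
    have hw1 : t • w.1 = y₂ := congrArg Prod.fst hw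
    have hw2 : t * w.2 = yn := congrArg Prod.snd hw
    have hc4w : e2 w.1 ≤ c₄ ∧ |w.2| ≤ c₄ := by
      have h := hW₂ w hwW
      have h1' : e2 w.1 ≤ Real.sqrt (e2 w.1 ^ 2 + w.2 ^ 2) := by
        have := Real.sqrt_le_sqrt (show e2 w.1 ^ 2 ≤ e2 w.1 ^ 2 + w.2 ^ 2 by
          nlinarith [sq_nonneg w.2])
        rwa [Real.sqrt_sq (e2_nonneg _)] at this
      have h2' : |w.2| ≤ Real.sqrt (e2 w.1 ^ 2 + w.2 ^ 2) := by
        rw [← Real.sqrt_sq_eq_abs]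
        exact Real.sqrt_le_sqrt (by nlinarith [sq_nonneg (e2 w.1)])
      exact ⟨h1'.trans h, h2'.trans h⟩
    have hynle : yn ≤ c₄ * c₂ ^ s * X ^ s := by
      rw [← hw2]
      calc t * w.2 ≤ t * c₄ := by
            have := (abs_le.1 hc4w.2).2
            nlinarith
        _ = c₄ * c₂ ^ s * X ^ s := by rw [ht, hpow c₂ hc₂]; ring
    have hynnn : 0 ≤ yn := by
      by_contra h
      push_neg at h
      have : c₂⁻¹ * yn < 0 := mul_neg_of_pos_of_neg (inv_pos.2 hc₂) h
      linarith [hνnn y₁, h1]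
    refine ⟨?_, hynle, ?_⟩
    · -- e2 y₁ ≤ yn
      rcases eq_or_lt_of_le hynnn with h0 | hpos
      · have : ν y₁ = 0 := le_antisymm (by rw [← h0] at h1; simpa using h1) (hνnn y₁)
        rw [hν₃ y₁ this, e2_zero, ← h0]
      · have hcy : 0 < c₂⁻¹ * yn := mul_pos (inv_pos.2 hc₂) hpos
        have hv : ν ((c₂⁻¹ * yn)⁻¹ • y₁) ≤ 1 := by
          rw [hν₁, abs_of_pos (inv_pos.2 hcy)]
          rw [inv_mul_le_iff₀ hcy, mul_one]
          exact h1
        have := hball₂ _ hv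
        rw [e2_smul, abs_of_pos (inv_pos.2 hcy)] at this
        rw [inv_mul_le_iff₀ hcy] at this
        calc e2 y₁ ≤ c₂⁻¹ * yn * c₂ := this
          _ = yn := by field_simp
    · rw [← hw1, e2_smul, abs_of_pos htpos]
      calc t * e2 w.1 ≤ t * c₄ := by nlinarith [hc4w.1, e2_nonneg w.1]
        _ = c₄ * c₂ ^ s * X ^ s := by rw [ht, hpow c₂ hc₂]; ring
  · rintro ⟨y₁, y₂, yn⟩ ⟨⟨h1, h2, h3⟩, hne⟩
    dsimp only at h1 h2 h3
    simp only [Set.mem_setOf_eq] at hne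
    have hynpos : 0 < yn := lt_of_le_of_ne (le_trans (e2_nonneg y₁) h1) (Ne.symm hne)
    set t := (c₁ * X) ^ s with ht
    have htpos : 0 < t := hpowpos c₁ hc₁
    have htR : c₁ ^ s * X ^ s = t := (hpow c₁ hc₁).symm
    constructor
    · -- ν y₁ ≤ c₁⁻¹ * yn
      have hcy : 0 < c₁⁻¹ * yn := mul_pos (inv_pos.2 hc₁) hynpos
      have he : e2 ((c₁⁻¹ * yn)⁻¹ • y₁) ≤ c₁ := by
        rw [e2_smul, abs_of_pos (inv_pos.2 hcy), inv_mul_le_iff₀ hcy]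
        calc e2 y₁ ≤ yn := h1
          _ = c₁⁻¹ * yn * c₁ := by field_simp
      have := hball₁ _ he
      rw [hν₁, abs_of_pos (inv_pos.2 hcy), inv_mul_le_iff₀ hcy, mul_one] at this
      exact this
    · refine ⟨(t⁻¹ • y₂, t⁻¹ * yn), ?_, ?_⟩
      · apply hW₁
        · rw [e2_smul, abs_of_pos (inv_pos.2 htpos), inv_mul_le_iff₀ htpos]
          calc e2 y₂ ≤ c₃ * c₁ ^ s * X ^ s := h3
            _ = t * c₃ := by rw [← htR]; ring
        · exact mul_pos (inv_pos.2 htpos) hynpos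
        · rw [inv_mul_le_iff₀ htpos]
          calc yn ≤ c₃ * c₁ ^ s * X ^ s := h2
            _ = t * c₃ := by rw [← htR]; ring
      · show t • ((t⁻¹ • y₂, t⁻¹ * yn)) = (y₂, yn)
        rw [Prod.smul_mk]
        congr 1
        · rw [smul_smul, mul_inv_cancel₀ htpos.ne', one_smul]
        · show t * (t⁻¹ * yn) = yn
          field_simp
end

section
/- Let k ≥ 1, m ≥ 1, n = k+m+1, and let w₁, w₂, w₃ > 0 with w₁ ≥ 2max(w₂, w₃). For v ∈ ℝ^{n−1} suppose ‖(v₁,…,v_k)‖₂ ≤ (1/2)v_{n−1}. Set z_{n−1} = v_{n−1} + (w₂w₃/(w₁² − w₃²)) v_k and z_j = v_j for j < n−1. Then ((w₂/w₁)z_k + (w₃/w₁)z_{n−1})² + ‖(z₁,…,z_{k−1})‖₂² ≤ z_{n−1}², and z_{n−1} ≥ 0. -/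
set_option maxHeartbeats 1000000


/-- The key shear inequality: with `w₁ ≥ 2 max(w₂,w₃)` and `‖(v₁,…,v_k)‖₂ ≤ v_{n-1}/2`,
setting `z_{n-1} = v_{n-1} + (w₂w₃/(w₁² - w₃²)) v_k`, one has
`((w₂/w₁)z_k + (w₃/w₁)z_{n-1})² + ‖(z₁,…,z_{k-1})‖₂² ≤ z_{n-1}²` and `z_{n-1} ≥ 0`. -/
theorem shear_inequality (k : ℕ) (hk : 0 < k)
    (w₁ w₂ w₃ : ℝ) (h₁ : 0 < w₁) (h₂ : 0 < w₂) (h₃ : 0 < w₃)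
    (hw : 2 * max w₂ w₃ ≤ w₁)
    (v : Fin k → ℝ) (vn : ℝ)
    (hv : Real.sqrt (∑ i, v i ^ 2) ≤ (1 / 2) * vn)
    (zn : ℝ)
    (hzn : zn = vn + (w₂ * w₃ / (w₁ ^ 2 - w₃ ^ 2)) * v ⟨k - 1, by omega⟩) :
    ((w₂ / w₁) * v ⟨k - 1, by omega⟩ + (w₃ / w₁) * zn) ^ 2
        + (∑ i ∈ Finset.univ.erase (⟨k - 1, by omega⟩ : Fin k), v i ^ 2) ≤ zn ^ 2
      ∧ 0 ≤ zn := by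
  have h₂₁ : 2 * w₂ ≤ w₁ := le_trans (by nlinarith [le_max_left w₂ w₃]) hw
  have h₃₁ : 2 * w₃ ≤ w₁ := le_trans (by nlinarith [le_max_right w₂ w₃]) hw
  have hA : (0:ℝ) < w₁ ^ 2 - w₃ ^ 2 := by nlinarith
  have hAlow : (3/4) * w₁ ^ 2 ≤ w₁ ^ 2 - w₃ ^ 2 := by nlinarith
  set vk : ℝ := v ⟨k - 1, by omega⟩ with hvk_def
  set c : ℝ := w₂ * w₃ / (w₁ ^ 2 - w₃ ^ 2) with hc_def
  have hAc : (w₁ ^ 2 - w₃ ^ 2) * c = w₂ * w₃ := by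
    rw [hc_def, mul_div_cancel₀ _ (ne_of_gt hA)]
  have hc0 : 0 ≤ c := le_of_lt (div_pos (by positivity) hA)
  have hc3 : c ≤ 1/3 := by
    rw [hc_def, div_le_iff₀ hA]; nlinarith
  set s : ℝ := ∑ i, v i ^ 2 with hs_def
  have hs0 : 0 ≤ s := Finset.sum_nonneg fun i _ => sq_nonneg _
  have hvn : 0 ≤ vn := by
    have := Real.sqrt_nonneg s
    linarith [hv]
  have hsle : s ≤ vn ^ 2 / 4 := by
    have h1 : Real.sqrt s ^ 2 ≤ ((1/2) * vn) ^ 2 :=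
      pow_le_pow_left₀ (Real.sqrt_nonneg s) hv 2
    rw [Real.sq_sqrt hs0] at h1
    nlinarith
  have hvkmem : (⟨k - 1, by omega⟩ : Fin k) ∈ (Finset.univ : Finset (Fin k)) :=
    Finset.mem_univ _
  have hvksq : vk ^ 2 ≤ s :=
    Finset.single_le_sum (fun i _ => sq_nonneg (v i)) hvkmem
  set S : ℝ := ∑ i ∈ Finset.univ.erase (⟨k - 1, by omega⟩ : Fin k), v i ^ 2 with hS_def
  have hS : S + vk ^ 2 = s := Finset.sum_erase_add _ _ hvkmem
  have hS0 : 0 ≤ S := Finset.sum_nonneg fun i _ => sq_nonneg _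
  have hvkle : vk ^ 2 ≤ vn ^ 2 / 4 := le_trans hvksq hsle
  clear_value vk c s S
  have hznpos : 0 ≤ zn := by
    rw [hzn]
    have hvklb : -(vn / 2) ≤ vk := by nlinarith
    nlinarith [mul_nonneg hc0 (by linarith : (0:ℝ) ≤ vn / 2 + vk),
      mul_nonneg (by linarith : (0:ℝ) ≤ 1/3 - c) hvn]
  refine ⟨?_, hznpos⟩
  have hAc2 : (w₁ ^ 2 - w₃ ^ 2) * c ^ 2 = w₂ * w₃ * c := by
    linear_combination c * hAc
  have hcoef : w₂ ^ 2 + (w₁ ^ 2 - w₃ ^ 2) * c ^ 2 ≤ w₁ ^ 2 := by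
    rw [hAc2]
    nlinarith [mul_nonneg (by linarith : (0:ℝ) ≤ 1/3 - c) (mul_pos h₂ h₃).le,
      mul_nonneg (by linarith : (0:ℝ) ≤ w₁ - 2*w₂) (by linarith : (0:ℝ) ≤ w₁ - 2*w₃),
      mul_nonneg (by linarith : (0:ℝ) ≤ w₁ - 2*w₂) (by linarith : (0:ℝ) ≤ w₁ + 2*w₂)]
  have hid : w₁ ^ 2 * zn ^ 2 - (w₂ * vk + w₃ * zn) ^ 2
      = (w₁ ^ 2 - w₃ ^ 2) * vn ^ 2 - ((w₁ ^ 2 - w₃ ^ 2) * c ^ 2 + w₂ ^ 2) * vk ^ 2 := by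
    rw [hzn]
    linear_combination (2 * vk * vn + 2 * c * vk ^ 2) * hAc
  have key : w₁ ^ 2 * (((w₂ / w₁) * vk + (w₃ / w₁) * zn) ^ 2 + S) ≤ w₁ ^ 2 * zn ^ 2 := by
    have hexp : w₁ ^ 2 * ((w₂ / w₁) * vk + (w₃ / w₁) * zn) ^ 2
        = (w₂ * vk + w₃ * zn) ^ 2 := by
      field_simp
    rw [mul_add, hexp]
    have hsvn : w₁ ^ 2 * s ≤ w₁ ^ 2 * (vn ^ 2 / 4) :=
      mul_le_mul_of_nonneg_left hsle (by positivity)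
    nlinarith [mul_nonneg (by linarith : (0:ℝ) ≤ w₁ ^ 2 - (w₂ ^ 2 + (w₁ ^ 2 - w₃ ^ 2) * c ^ 2)) (sq_nonneg vk),
      sq_nonneg vn, sq_nonneg w₁]
  exact le_of_mul_le_mul_left key (by positivity)
end

section
/- Let k ≥ 1, m ≥ 0, n = k+m+1, R ≥ 10, and a ≥ 0, and consider I(R) := R^{−n} ∫₀^{R^{−n/k}} w^{m−1} dw + R^{−n−n(n−2)/k} ∫_{R^{−n/k}}^1 (log(w^{k/(n−1)} R^{n/(n−1)} + 2))^a w^{−k} dw (with m ≥ 1). If k ≥ 2 and a = 0, then I(R) ≪ R^{−n(n−1)/k}. If k = 1 and a = m−1, then I(R) ≪ R^{−n(n−1)} (log R)^m, where the implied constants depend only on n and a. -/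
open MeasureTheory Real Set

/-- Tail integral estimate: with
`I(R) = R^{-n} ∫₀^{R^{-n/k}} w^{m-1} dw
      + R^{-n-n(n-2)/k} ∫_{R^{-n/k}}^1 (log(w^{k/(n-1)} R^{n/(n-1)} + 2))^a w^{-k} dw`,
if `k ≥ 2` and `a = 0` then `I(R) ≪ R^{-n(n-1)/k}`, and if `k = 1` and `a = m-1` then
`I(R) ≪ R^{-n(n-1)} (log R)^m`, for all `R ≥ 10`. -/
theorem tail_integral_estimate (k m : ℕ) (hk : 1 ≤ k) (hm : 1 ≤ m)
    (a : ℝ) (ha : 0 ≤ a)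
    (n : ℝ) (hn : n = (k : ℝ) + m + 1)
    (I : ℝ → ℝ)
    (hI : I = fun R =>
      R ^ (-n) * (∫ w in Set.Ioc (0 : ℝ) (R ^ (-n / k)), w ^ ((m : ℝ) - 1))
        + R ^ (-n - n * (n - 2) / k)
          * ∫ w in Set.Ioc (R ^ (-n / (k : ℝ))) (1 : ℝ),
              (Real.log (w ^ ((k : ℝ) / (n - 1)) * R ^ (n / (n - 1)) + 2)) ^ a
                * w ^ (-(k : ℝ))) :
    (2 ≤ k → a = 0 →
      ∃ C : ℝ, 0 < C ∧ ∀ R : ℝ, 10 ≤ R → I R ≤ C * R ^ (-(n * (n - 1)) / k))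
    ∧ (k = 1 → a = (m : ℝ) - 1 →
      ∃ C : ℝ, 0 < C ∧ ∀ R : ℝ, 10 ≤ R →
        I R ≤ C * (R ^ (-(n * (n - 1))) * Real.log R ^ m)) := by
  subst hI
  have hm1 : (1:ℝ) ≤ (m:ℝ) := by exact_mod_cast hm
  have hm0 : (0:ℝ) < (m:ℝ) := by linarith
  have hk1 : (1:ℝ) ≤ (k:ℝ) := by exact_mod_cast hk
  have hn0 : (0:ℝ) < n := by rw [hn]; linarith
  have hn1 : (1:ℝ) < n := by rw [hn]; linarith
  constructor
  · -- case k ≥ 2, a = 0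
    rintro hk2 rfl
    have hk2' : (2:ℝ) ≤ (k:ℝ) := by exact_mod_cast hk2
    have hk0 : (k:ℝ) ≠ 0 := by linarith
    have hkm1 : ((k:ℝ) - 1) ≠ 0 := by linarith
    refine ⟨1/(m:ℝ) + 1/((k:ℝ)-1), by
      have h1 : 0 < 1/(m:ℝ) := by positivity
      have h2 : 0 < 1/((k:ℝ)-1) := by
        apply one_div_pos.mpr; linarith
      linarith, ?_⟩
    intro R hR
    have hR0 : (0:ℝ) < R := by linarith
    have hR1 : (1:ℝ) ≤ R := by linarith
    set T := R ^ (-n/(k:ℝ)) with hTdef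
    have hT0 : 0 < T := Real.rpow_pos_of_pos hR0 _
    have hT1 : T ≤ 1 := Real.rpow_le_one_of_one_le_of_nonpos hR1
      (div_nonpos_of_nonpos_of_nonneg (by linarith) (by linarith))
    have hI1 : (∫ w in Set.Ioc (0:ℝ) T, w ^ ((m:ℝ)-1)) = T ^ (m:ℝ) / m := by
      rw [← intervalIntegral.integral_of_le hT0.le,
        integral_rpow (Or.inl (by linarith : (-1:ℝ) < (m:ℝ)-1))]
      rw [show (m:ℝ) - 1 + 1 = (m:ℝ) by ring,
        Real.zero_rpow (by linarith : (m:ℝ) ≠ 0)]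
      ring
    have hexp1 : R ^ (-n) * (T ^ (m:ℝ)) = R ^ (-(n*(n-1))/(k:ℝ)) := by
      rw [hTdef, ← Real.rpow_mul hR0.le, ← Real.rpow_add hR0]
      congr 1
      rw [hn]; field_simp; ring
    have hkne : -(k:ℝ) ≠ -1 := by
      intro h
      have : (k:ℝ) = 1 := by linarith [neg_injective h]
      linarith
    have hI2 : (∫ w in Set.Ioc T 1,
        Real.log (w ^ ((k:ℝ)/(n-1)) * R ^ (n/(n-1)) + 2) ^ (0:ℝ) * w ^ (-(k:ℝ)))
        = (1 - T ^ (1-(k:ℝ)))/(1-(k:ℝ)) := by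
      simp only [Real.rpow_zero, one_mul]
      rw [← intervalIntegral.integral_of_le hT1,
        integral_rpow (Or.inr ⟨hkne, Set.notMem_uIcc_of_lt hT0 one_pos⟩)]
      rw [Real.one_rpow, show -(k:ℝ) + 1 = 1 - (k:ℝ) by ring]
    have hb2 : (1 - T ^ (1-(k:ℝ)))/(1-(k:ℝ)) ≤ T ^ (1-(k:ℝ)) / ((k:ℝ)-1) := by
      have heq : (1 - T ^ (1-(k:ℝ)))/(1-(k:ℝ)) = (T ^ (1-(k:ℝ)) - 1)/((k:ℝ)-1) := by
        rw [div_eq_div_iff (by intro h; apply hkm1; linarith) hkm1]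
        ring
      rw [heq]
      exact div_le_div_of_nonneg_right (by linarith) (by linarith)
    have hexp2 : R ^ (-n - n*(n-2)/(k:ℝ)) * T ^ (1-(k:ℝ)) = R ^ (-(n*(n-1))/(k:ℝ)) := by
      rw [hTdef, ← Real.rpow_mul hR0.le, ← Real.rpow_add hR0]
      congr 1
      rw [hn]; field_simp; ring
    have hpre : (0:ℝ) < R ^ (-n - n*(n-2)/(k:ℝ)) := Real.rpow_pos_of_pos hR0 _
    have A2 : R ^ (-n - n*(n-2)/(k:ℝ)) * ((1 - T ^ (1-(k:ℝ)))/(1-(k:ℝ)))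
        ≤ R ^ (-(n*(n-1))/(k:ℝ)) * (1/((k:ℝ)-1)) := by
      calc R ^ (-n - n*(n-2)/(k:ℝ)) * ((1 - T ^ (1-(k:ℝ)))/(1-(k:ℝ)))
          ≤ R ^ (-n - n*(n-2)/(k:ℝ)) * (T ^ (1-(k:ℝ)) / ((k:ℝ)-1)) :=
            mul_le_mul_of_nonneg_left hb2 hpre.le
        _ = R ^ (-(n*(n-1))/(k:ℝ)) * (1/((k:ℝ)-1)) := by
            rw [← hexp2]; ring
    show R ^ (-n) * (∫ w in Set.Ioc (0:ℝ) (R ^ (-n/(k:ℝ))), w ^ ((m:ℝ)-1))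
        + R ^ (-n - n*(n-2)/(k:ℝ)) * (∫ w in Set.Ioc (R ^ (-n/(k:ℝ))) (1:ℝ),
            Real.log (w ^ ((k:ℝ)/(n-1)) * R ^ (n/(n-1)) + 2) ^ (0:ℝ) * w ^ (-(k:ℝ)))
        ≤ (1/(m:ℝ) + 1/((k:ℝ)-1)) * R ^ (-(n*(n-1))/(k:ℝ))
    rw [← hTdef, hI1, hI2]
    have A1 : R ^ (-n) * (T ^ (m:ℝ) / m) = R ^ (-(n*(n-1))/(k:ℝ)) * (1/(m:ℝ)) := by
      rw [← hexp1]; ring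
    rw [A1]
    have h3 : (1/(m:ℝ) + 1/((k:ℝ)-1)) * R ^ (-(n*(n-1))/(k:ℝ))
        = R ^ (-(n*(n-1))/(k:ℝ)) * (1/(m:ℝ)) + R ^ (-(n*(n-1))/(k:ℝ)) * (1/((k:ℝ)-1)) := by
      ring
    rw [h3]
    linarith [A2]
  · -- case k = 1, a = m - 1
    rintro rfl rfl
    have hlogten : (0:ℝ) < Real.log 10 := Real.log_pos (by norm_num)
    refine ⟨1/(m:ℝ) + n * ((n+1) ^ ((m:ℝ)-1)), by
      have h1 : 0 < 1/(m:ℝ) := by positivity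
      have h2 : 0 ≤ n * ((n+1) ^ ((m:ℝ)-1)) :=
        mul_nonneg hn0.le (Real.rpow_nonneg (by linarith) _)
      linarith, ?_⟩
    intro R hR
    have hR0 : (0:ℝ) < R := by linarith
    have hR1 : (1:ℝ) ≤ R := by linarith
    have hlog1 : (1:ℝ) < Real.log R := by
      rw [Real.lt_log_iff_exp_lt hR0]
      have := Real.exp_one_lt_d9
      have h10 : (2.7182818286:ℝ) ≤ 10 := by norm_num
      linarith
    have hlog0 : (0:ℝ) < Real.log R := by linarith
    simp only [Nat.cast_one, div_one, Real.rpow_neg_one]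
    set T := R ^ (-n) with hTdef
    have hT0 : 0 < T := Real.rpow_pos_of_pos hR0 _
    have hT1 : T ≤ 1 := Real.rpow_le_one_of_one_le_of_nonpos hR1 (by linarith)
    have hI1 : (∫ w in Set.Ioc (0:ℝ) T, w ^ ((m:ℝ)-1)) = T ^ (m:ℝ) / m := by
      rw [← intervalIntegral.integral_of_le hT0.le,
        integral_rpow (Or.inl (by linarith : (-1:ℝ) < (m:ℝ)-1))]
      rw [show (m:ℝ) - 1 + 1 = (m:ℝ) by ring,
        Real.zero_rpow (by linarith : (m:ℝ) ≠ 0)]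
      ring
    have hncast : n = (m:ℝ) + 2 := by rw [hn]; push_cast; ring
    have hexp1 : R ^ (-n) * (T ^ (m:ℝ)) = R ^ (-(n*(n-1))) := by
      rw [hTdef, ← Real.rpow_mul hR0.le, ← Real.rpow_add hR0]
      congr 1
      rw [hncast]; ring
    set M := ((n+1) * Real.log R) ^ ((m:ℝ)-1) with hMdef
    have hM0 : 0 ≤ M := Real.rpow_nonneg (mul_nonneg (by linarith) hlog0.le) _
    -- pointwise bound
    have hpt : ∀ w ∈ Set.Ioc T 1,
        Real.log (w ^ ((1:ℝ)/(n-1)) * R ^ (n/(n-1)) + 2) ^ ((m:ℝ)-1) * w⁻¹ ≤ M * w⁻¹ := by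
      intro w hw
      have hw0 : 0 < w := lt_trans hT0 hw.1
      have hw1 : w ≤ 1 := hw.2
      have he1 : (0:ℝ) ≤ 1/(n-1) := div_nonneg zero_le_one (by linarith)
      have harg1 : w ^ ((1:ℝ)/(n-1)) ≤ 1 := Real.rpow_le_one hw0.le hw1 he1
      have hargp : 0 < w ^ ((1:ℝ)/(n-1)) := Real.rpow_pos_of_pos hw0 _
      have hRnn1 : R ^ (n/(n-1)) ≤ R ^ n := by
        apply Real.rpow_le_rpow_of_exponent_le hR1
        rw [div_le_iff₀ (by linarith)]
        nlinarith
      have hRn1 : (1:ℝ) ≤ R ^ n := Real.one_le_rpow hR1 hn0.le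
      have hRnp : (0:ℝ) < R ^ (n/(n-1)) := Real.rpow_pos_of_pos hR0 _
      have hRsplit : R ^ (n+1) = R ^ n * R := by
        rw [Real.rpow_add hR0, Real.rpow_one]
      have hub : w ^ ((1:ℝ)/(n-1)) * R ^ (n/(n-1)) + 2 ≤ R ^ (n+1) := by
        have h1 : w ^ ((1:ℝ)/(n-1)) * R ^ (n/(n-1)) ≤ R ^ n := by
          calc w ^ ((1:ℝ)/(n-1)) * R ^ (n/(n-1)) ≤ 1 * R ^ (n/(n-1)) :=
                mul_le_mul_of_nonneg_right harg1 hRnp.le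
            _ = R ^ (n/(n-1)) := one_mul _
            _ ≤ R ^ n := hRnn1
        rw [hRsplit]
        have h2 : R ^ n * 3 ≤ R ^ n * R := by
          apply mul_le_mul_of_nonneg_left (by linarith) (by linarith)
        linarith
      have hargge1 : (1:ℝ) ≤ w ^ ((1:ℝ)/(n-1)) * R ^ (n/(n-1)) + 2 := by
        have := mul_pos hargp hRnp
        linarith
      have hloglog : Real.log (w ^ ((1:ℝ)/(n-1)) * R ^ (n/(n-1)) + 2) ≤ (n+1) * Real.log R := by
        calc Real.log (w ^ ((1:ℝ)/(n-1)) * R ^ (n/(n-1)) + 2)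
            ≤ Real.log (R ^ (n+1)) := Real.log_le_log (by linarith) hub
          _ = (n+1) * Real.log R := Real.log_rpow hR0 _
      have hbase : Real.log (w ^ ((1:ℝ)/(n-1)) * R ^ (n/(n-1)) + 2) ^ ((m:ℝ)-1) ≤ M := by
        rw [hMdef]
        exact Real.rpow_le_rpow (Real.log_nonneg hargge1) hloglog (by linarith)
      exact mul_le_mul_of_nonneg_right hbase (inv_nonneg.mpr hw0.le)
    -- integrability of the dominating function
    have hg : IntegrableOn (fun w : ℝ => M * w⁻¹) (Set.Ioc T 1) volume := by
      apply MeasureTheory.Integrable.const_mul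
      have h1 : IntegrableOn (fun w : ℝ => w⁻¹) (Set.Icc T 1) volume := by
        apply ContinuousOn.integrableOn_Icc
        exact ContinuousOn.inv₀ continuousOn_id
          (fun x hx => ne_of_gt (lt_of_lt_of_le hT0 hx.1))
      exact h1.mono_set Set.Ioc_subset_Icc_self
    have hgint : (∫ w in Set.Ioc T 1, M * w⁻¹) = M * (n * Real.log R) := by
      rw [MeasureTheory.integral_const_mul]
      congr 1
      rw [← intervalIntegral.integral_of_le hT1,
        integral_inv (Set.notMem_uIcc_of_lt hT0 one_pos)]
      rw [one_div, Real.log_inv, hTdef, Real.log_rpow hR0]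
      ring
    have hMn0 : 0 ≤ M * (n * Real.log R) := by
      apply mul_nonneg hM0
      exact mul_nonneg hn0.le hlog0.le
    have key : (∫ w in Set.Ioc T 1,
        Real.log (w ^ ((1:ℝ)/(n-1)) * R ^ (n/(n-1)) + 2) ^ ((m:ℝ)-1) * w⁻¹)
        ≤ M * (n * Real.log R) := by
      by_cases hf : IntegrableOn (fun w : ℝ =>
          Real.log (w ^ ((1:ℝ)/(n-1)) * R ^ (n/(n-1)) + 2) ^ ((m:ℝ)-1) * w⁻¹)
          (Set.Ioc T 1) volume
      · calc (∫ w in Set.Ioc T 1,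
            Real.log (w ^ ((1:ℝ)/(n-1)) * R ^ (n/(n-1)) + 2) ^ ((m:ℝ)-1) * w⁻¹)
            ≤ ∫ w in Set.Ioc T 1, M * w⁻¹ :=
              setIntegral_mono_on hf hg measurableSet_Ioc hpt
          _ = M * (n * Real.log R) := hgint
      · rw [MeasureTheory.integral_undef hf]
        exact hMn0
    -- assemble
    have hexp2 : R ^ (-n - n*(n-2)) = R ^ (-(n*(n-1))) * R ^ (0:ℝ) * 1 := by
      rw [Real.rpow_zero]
      rw [show -n - n*(n-2) = -(n*(n-1)) by ring]
      ring
    have hE : R ^ (-n - n*(n-2)) = R ^ (-(n*(n-1))) := by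
      rw [show -n - n*(n-2) = -(n*(n-1)) by ring]
    have hEpos : (0:ℝ) < R ^ (-(n*(n-1))) := Real.rpow_pos_of_pos hR0 _
    have hMeq : M * (n * Real.log R) = n * ((n+1) ^ ((m:ℝ)-1)) * Real.log R ^ m := by
      rw [hMdef, Real.mul_rpow (by linarith) hlog0.le]
      rw [← Real.rpow_natCast (Real.log R) m,
        show ((m:ℕ):ℝ) = ((m:ℝ)-1) + 1 by push_cast; ring,
        Real.rpow_add hlog0, Real.rpow_one]
      ring
    have hlogm : (1:ℝ) ≤ Real.log R ^ m := one_le_pow₀ hlog1.le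
    rw [hTdef] at hexp1
    have A1 : T * (T ^ (m:ℝ) / (m:ℝ)) = R ^ (-(n*(n-1))) * (1/(m:ℝ)) := by
      rw [hTdef, ← hexp1]; ring
    rw [hI1, A1]
    have B1 : R ^ (-(n*(n-1))) * (1/(m:ℝ)) ≤ 1/(m:ℝ) * (R ^ (-(n*(n-1))) * Real.log R ^ m) := by
      rw [mul_comm]
      apply mul_le_mul_of_nonneg_left ?_ (by positivity : (0:ℝ) ≤ 1/(m:ℝ))
      nlinarith
    have B2 : R ^ (-n - n*(n-2)) * (∫ w in Set.Ioc T 1,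
          Real.log (w ^ ((1:ℝ)/(n-1)) * R ^ (n/(n-1)) + 2) ^ ((m:ℝ)-1) * w⁻¹)
        ≤ n * ((n+1) ^ ((m:ℝ)-1)) * (R ^ (-(n*(n-1))) * Real.log R ^ m) := by
      calc R ^ (-n - n*(n-2)) * (∫ w in Set.Ioc T 1,
            Real.log (w ^ ((1:ℝ)/(n-1)) * R ^ (n/(n-1)) + 2) ^ ((m:ℝ)-1) * w⁻¹)
          ≤ R ^ (-n - n*(n-2)) * (M * (n * Real.log R)) :=
            mul_le_mul_of_nonneg_left key (Real.rpow_nonneg hR0.le _)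
        _ = n * ((n+1) ^ ((m:ℝ)-1)) * (R ^ (-(n*(n-1))) * Real.log R ^ m) := by
            rw [hE, hMeq]; ring
    have hC : (1/(m:ℝ) + n*((n+1) ^ ((m:ℝ)-1))) * (R ^ (-(n*(n-1))) * Real.log R ^ m)
        = 1/(m:ℝ) * (R ^ (-(n*(n-1))) * Real.log R ^ m)
          + n * ((n+1) ^ ((m:ℝ)-1)) * (R ^ (-(n*(n-1))) * Real.log R ^ m) := by
      ring
    rw [hC]
    linarith [B1, B2]
end
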